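/- arXiv:2202.10147 — 2 statements merged into one kernel-verified Lean document; each statement's English description precedes it below -/
import Mathlib

section
/- Let J ⊂ I be monomial ideals such that I is linear over J. If J is componentwise linear, then I is componentwise linear. Moreover, if J has a linear resolution and I is generated in a single degree, then I has a linear resolution. -/
open MvPolynomial

/-- The monomial `x^u` in the polynomial ring `K[x_i : i ∈ σ]`. -/
noncomputable def mon (K : Type) [Field K] {σ : Type} (u : σ →₀ ℕ) :
    MvPolynomial σ K := MvPolynomial.monomial u 1

/-- Total degree of an exponent vector. -/
def mdeg {σ : Type} (u : σ →₀ ℕ) : ℕ := u.sum fun _ e => e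

/-- The monomial ideal generated by the monomials with exponent vectors in `S`. -/
noncomputable def monIdeal (K : Type) [Field K] {σ : Type} (S : Set (σ →₀ ℕ)) :
    Ideal (MvPolynomial σ K) := Ideal.span ((mon K) '' S)

/-- An ideal is generated by variables. -/
def genByVars {K : Type} [Field K] {σ : Type} (J : Ideal (MvPolynomial σ K)) : Prop :=
  ∃ A : Set σ, J = Ideal.span ((fun i => (X i : MvPolynomial σ K)) '' A)

/-- An ideal is generated by linear forms. -/
def genByLinForms {K : Type} [Field K] {σ : Type} (J : Ideal (MvPolynomial σ K)) : Prop :=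
  ∃ S : Set (MvPolynomial σ K), (∀ f ∈ S, f.IsHomogeneous 1) ∧ J = Ideal.span S

/-- `S` is an antichain under divisibility of monomials, i.e. it is the minimal
monomial generating set `G(I)` of the monomial ideal `I` it generates. -/
def IsMinGenSet {σ : Type} (S : Set (σ →₀ ℕ)) : Prop :=
  ∀ u ∈ S, ∀ v ∈ S, u ≤ v → u = v

/-- A monomial ideal, presented by its minimal monomial generating set `S`, is
quasi-linear if for every `u ∈ S` the colon ideal `(G(I) \ {u}) : u` is generated
by variables. -/
def QuasiLinear (K : Type) [Field K] {σ : Type} (S : Set (σ →₀ ℕ)) : Prop :=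
  ∀ u ∈ S, genByVars (Submodule.colon (monIdeal K (S \ {u})) (Ideal.span {mon K u}))

/-- A minimal graded free resolution of an ideal `I` in a polynomial ring:
graded free modules `F i = ⊕_k R(-dg i k)` of rank `b i`, differentials
`F (i+1) → F i` given by the matrices `A i`, whose entries are homogeneous of the
appropriate degree and of positive degree (this is minimality, i.e. all entries lie
in the graded maximal ideal), together with an augmentation `F 0 → I` given by the
homogeneous generators `g`, everything being exact. -/
structure MinFreeRes {K : Type} [Field K] {σ : Type} (I : Ideal (MvPolynomial σ K)) where
  b : ℕ → ℕ
  dg : (i : ℕ) → Fin (b i) → ℕ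
  g : Fin (b 0) → MvPolynomial σ K
  A : (i : ℕ) → Matrix (Fin (b i)) (Fin (b (i+1))) (MvPolynomial σ K)
  g_hom : ∀ k, (g k).IsHomogeneous (dg 0 k)
  A_hom : ∀ i k l, A i k l = 0 ∨
    ((A i k l).IsHomogeneous (dg (i+1) l - dg i k) ∧ dg i k < dg (i+1) l)
  aug_range : LinearMap.range (Fintype.linearCombination (MvPolynomial σ K)
      g) = I
  aug_exact : LinearMap.ker (Fintype.linearCombination (MvPolynomial σ K)
      g) = LinearMap.range ((A 0).mulVecLin)
  is_exact : ∀ i, LinearMap.ker ((A i).mulVecLin) = LinearMap.range ((A (i+1)).mulVecLin)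

/-- The graded Betti number `β_{i,j}` read off from a minimal graded free resolution:
the number of generators of the `i`-th free module of degree `j`. -/
noncomputable def MinFreeRes.beta {K : Type} [Field K] {σ : Type}
    {I : Ideal (MvPolynomial σ K)} (res : MinFreeRes I) (i j : ℕ) : ℕ :=
  (Finset.univ.filter fun k => res.dg i k = j).card

/-- `I` has a `d`-linear resolution: it has a minimal graded free resolution in which the
`i`-th free module is generated entirely in degree `i + d`, i.e. `β_{i,j}(I) = 0`
whenever `j - i ≠ d`. -/
def HasLinRes {K : Type} [Field K] {σ : Type} (I : Ideal (MvPolynomial σ K))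
    (d : ℕ) : Prop :=
  ∃ res : MinFreeRes I, ∀ i k, res.dg i k = i + d

/-- `reg I ≤ r`: a minimal graded free resolution of `I` has all generators of the
`i`-th free module in degrees `≤ i + r`, i.e. `β_{i,j}(I) = 0` whenever `j - i > r`. -/
def RegLE {K : Type} [Field K] {σ : Type} (I : Ideal (MvPolynomial σ K)) (r : ℕ) : Prop :=
  ∃ res : MinFreeRes I, ∀ i k, res.dg i k ≤ i + r

/-- A graded ideal `I` is componentwise linear if for every `j` the ideal generated by
the degree-`j` homogeneous elements of `I` has a `j`-linear resolution. -/
def CompLinear (K : Type) [Field K] {σ : Type} (I : Ideal (MvPolynomial σ K)) : Prop :=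
  ∀ j : ℕ, HasLinRes (Ideal.span {f | f ∈ I ∧ f.IsHomogeneous j}) j

/-!
Add the new generators one at a time. If `J` has a `d`-linear resolution `F`, `u` has degree
`d` and `J : u` is generated by variables, then `J : u` has a `1`-linear (Koszul) resolution
`P`; multiplication by `u` lifts to a comparison map `φ : P → F` of degree `1`, and its mapping
cone is a `d`-linear resolution of `J + (u)`. This gives the second statement.

For the first, the degree-`j` component of `(J, u)` is that of `J` plus the degree-`j`
multiples `x^w` of `u`. Adding these in decreasing lexicographic order, each colon ideal is again
generated by variables: a divisor of `x^z x^w` coming from `J` yields a variable through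
`J : u`, and one among the lex-larger multiples yields a variable by moving one unit of
`w / u` to the first position where it differs from the divisor. So the cone argument applies
at every step.
-/

theorem exists_seq_of_forall_exists {α : ℕ → Type*} (p : ∀ i, α i → Prop)
    (q : ∀ i, α i → α (i + 1) → Prop) {a₀ : α 0} (h₀ : p 0 a₀)
    (h : ∀ i a, p i a → ∃ b, p (i + 1) b ∧ q i a b) :
    ∃ f : ∀ i, α i, f 0 = a₀ ∧ ∀ i, p i (f i) ∧ q i (f i) (f (i + 1)) := by
  choose next hnext using h
  let f : ∀ i, {a : α i // p i a} := fun i =>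
    Nat.rec ⟨a₀, h₀⟩ (fun i a => ⟨next i a.1 a.2, (hnext i a.1 a.2).1⟩) i
  exact ⟨fun i => (f i).1, rfl, fun i => ⟨(f i).2, (hnext i (f i).1 (f i).2).2⟩⟩

section MatrixExact

open Matrix Function

variable {R : Type*} [CommRing R] {ι₀ ι₁ ι₂ κ₀ κ₁ κ₂ μ : Type*}
  [Fintype ι₁] [Fintype ι₂] [Fintype κ₁] [Fintype κ₂]

theorem Function.Exact.matrix_mul_eq_zero {A' : Matrix ι₁ ι₂ R} {A : Matrix ι₀ ι₁ R}
    (h : Exact A'.mulVec A.mulVec) : A * A' = 0 := by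
  classical
  ext k l
  have hl : (A * A') *ᵥ Pi.single l 1 = 0 := by
    rw [← mulVec_mulVec]; exact h.apply_apply_eq_zero _
  simpa [mulVec_single_one] using congrFun hl k

theorem Function.Exact.transpose_mem_range {A' : Matrix ι₁ ι₂ R} {A : Matrix ι₀ ι₁ R}
    (h : Exact A'.mulVec A.mulVec) {B : Matrix ι₁ μ R} (hB : A * B = 0) (l : μ) :
    Bᵀ l ∈ Set.range A'.mulVec :=
  (h _).mp (funext fun k => congrFun (congrFun hB k) l)

theorem Matrix.exact_reindex {A' : Matrix ι₁ ι₂ R} {A : Matrix ι₀ ι₁ R}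
    (h : Exact A'.mulVec A.mulVec) {ι₀' ι₁' ι₂' : Type*} [Fintype ι₁'] [Fintype ι₂']
    (e₀ : ι₀ ≃ ι₀') (e₁ : ι₁ ≃ ι₁') (e₂ : ι₂ ≃ ι₂') :
    Exact (reindex e₁ e₂ A').mulVec (reindex e₀ e₁ A).mulVec := by
  intro y
  rw [reindex_apply, reindex_apply, submatrix_mulVec_equiv, Equiv.symm_symm]
  constructor
  · intro hy
    obtain ⟨x, hx⟩ := (h (y ∘ e₁)).mp (funext fun k => by simpa using congrFun hy (e₀ k))
    refine ⟨x ∘ e₂.symm, ?_⟩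
    rw [submatrix_mulVec_equiv, Equiv.symm_symm, Function.comp_assoc, e₂.symm_comp_self,
      Function.comp_id, hx, Function.comp_assoc, e₁.self_comp_symm, Function.comp_id]
  · rintro ⟨x, rfl⟩
    rw [submatrix_mulVec_equiv, Equiv.symm_symm, Function.comp_assoc, e₁.symm_comp_self,
      Function.comp_id, h.apply_apply_eq_zero]
    rfl

/-- The mapping cone of a chain map `φ, φ'` between two exact sequences is exact. -/
theorem Matrix.exact_fromBlocks {A : Matrix ι₀ ι₁ R} {A' : Matrix ι₁ ι₂ R}
    {B : Matrix κ₀ κ₁ R} {B' : Matrix κ₁ κ₂ R} {φ : Matrix ι₀ κ₁ R} {φ' : Matrix ι₁ κ₂ R}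
    (hA : Exact A'.mulVec A.mulVec) (hB : Exact B'.mulVec B.mulVec) (hφ : A * φ' = φ * B') :
    Exact (fromBlocks A' φ' 0 (-B')).mulVec (fromBlocks A φ 0 (-B)).mulVec := by
  intro y
  constructor
  · obtain ⟨x, z, rfl⟩ : ∃ x z, y = Sum.elim x z := ⟨_, _, (Sum.elim_comp_inl_inr y).symm⟩
    simp only [fromBlocks_mulVec, Sum.elim_comp_inl, Sum.elim_comp_inr, zero_mulVec, zero_add,
      neg_mulVec]
    intro h
    obtain ⟨z', rfl⟩ := (hB z).mp (neg_eq_zero.mp (congrArg (· ∘ Sum.inr) h))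
    obtain ⟨x', hx'⟩ := (hA (x + φ' *ᵥ z')).mp (by
      rw [mulVec_add, mulVec_mulVec, hφ, ← mulVec_mulVec]
      exact congrArg (· ∘ Sum.inl) h)
    refine ⟨Sum.elim x' (-z'), ?_⟩
    rw [fromBlocks_mulVec]
    simp [hx', mulVec_neg, neg_mulVec]
  · rintro ⟨w, rfl⟩
    rw [mulVec_mulVec, fromBlocks_multiply]
    simp [hA.matrix_mul_eq_zero, hB.matrix_mul_eq_zero, hφ]

theorem Matrix.replicateRow_mulVec_eq_zero_iff [Fintype ι₀] {ι : Type*} [Nonempty ι]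
    (v w : ι₀ → R) :
    replicateRow ι v *ᵥ w = 0 ↔ v ⬝ᵥ w = 0 := by
  rw [replicateRow_mulVec_eq_const, Function.const_eq_zero]

theorem Matrix.exact_replicateRow_iff [Fintype ι₀] {A : Matrix ι₀ ι₁ R} {g : ι₀ → R} :
    Exact A.mulVec (replicateRow (Fin 1) g).mulVec ↔
      LinearMap.ker (Fintype.linearCombination R g) = LinearMap.range A.mulVecLin := by
  rw [← LinearMap.exact_iff]
  refine forall_congr' fun x => ?_
  rw [replicateRow_mulVec_eq_zero_iff, Fintype.linearCombination_apply, dotProduct_comm]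
  rfl

/-- The bottom of the mapping cone of multiplication by `u`, where `g` generates an ideal `J`
and `p` generates `J : u` (this is `hp`). -/
theorem Matrix.exact_fromBlocks_replicateRow [Fintype ι₀] {A : Matrix ι₀ ι₁ R}
    {φ : Matrix ι₀ κ₁ R} {g : ι₀ → R} {p : κ₁ → R} {u : R}
    (hA : Exact A.mulVec (replicateRow (Fin 1) g).mulVec) (hφ : g ᵥ* φ = u • p)
    (hp : ∀ c x, g ⬝ᵥ x = c * u → ∃ z, p ⬝ᵥ z = c) :
    Exact (fromBlocks A φ 0 (-replicateRow (Fin 1) p)).mulVec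
      (replicateRow (Fin 1) (Sum.elim g fun _ => u)).mulVec := by
  have hgA : ∀ w, g ⬝ᵥ (A *ᵥ w) = 0 := fun w =>
    (replicateRow_mulVec_eq_zero_iff _ _).mp (hA.apply_apply_eq_zero w)
  intro y
  rw [replicateRow_mulVec_eq_zero_iff]
  constructor
  · obtain ⟨x, c, rfl⟩ : ∃ x c, y = Sum.elim x c := ⟨_, _, (Sum.elim_comp_inl_inr y).symm⟩
    rw [sumElim_dotProduct_sumElim]
    intro h
    have hc : (fun _ : Fin 1 => u) ⬝ᵥ c = u * c 0 := by simp [dotProduct]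
    obtain ⟨z, hz⟩ := hp (c 0) (-x) (by rw [dotProduct_neg]; linear_combination -h + hc)
    obtain ⟨w, hw⟩ := (hA (x + φ *ᵥ z)).mp (by
      rw [replicateRow_mulVec_eq_zero_iff, dotProduct_add, dotProduct_mulVec, hφ,
        smul_dotProduct, hz, smul_eq_mul]
      linear_combination h - hc)
    refine ⟨Sum.elim w (-z), ?_⟩
    rw [fromBlocks_mulVec]
    ext (k | k)
    · simp [hw, mulVec_neg]
    · simp [mulVec_neg, neg_mulVec, replicateRow_mulVec_eq_const, hz, Subsingleton.elim k 0]
  · rintro ⟨w, rfl⟩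
    rw [fromBlocks_mulVec, sumElim_dotProduct_sumElim, dotProduct_add, hgA, dotProduct_mulVec,
      hφ]
    simp [neg_mulVec, replicateRow_mulVec_eq_const, dotProduct, Finset.mul_sum, mul_assoc]

end MatrixExact

section MonomialIdeals

variable {K : Type} [Field K] {σ : Type}

theorem mdeg_eq_degree (u : σ →₀ ℕ) : mdeg u = u.degree := by
  simp [mdeg, Finsupp.degree_apply, Finsupp.sum]

theorem isHomogeneous_mon (u : σ →₀ ℕ) : (mon K u).IsHomogeneous (mdeg u) :=
  isHomogeneous_monomial _ (mdeg_eq_degree u).symm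

theorem mon_mul (a b : σ →₀ ℕ) : mon K a * mon K b = mon K (a + b) := by
  simp [mon, monomial_mul]

theorem support_mul_mon (f : MvPolynomial σ K) (u : σ →₀ ℕ) :
    (f * mon K u).support = f.support.map (addRightEmbedding u) :=
  AddMonoidAlgebra.support_coeff_mul_single f 1 (by simp) u

theorem mem_monIdeal {T : Set (σ →₀ ℕ)} {f : MvPolynomial σ K} :
    f ∈ monIdeal K T ↔ ∀ m ∈ f.support, m ∈ upperClosure T := by
  simp only [mem_upperClosure]
  exact mem_ideal_span_monomial_image

theorem mon_mem_monIdeal {T : Set (σ →₀ ℕ)} {m : σ →₀ ℕ} :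
    mon K m ∈ monIdeal K T ↔ m ∈ upperClosure T := by
  classical
  simp [mem_monIdeal, mon, support_monomial]

theorem monIdeal_union (T₁ T₂ : Set (σ →₀ ℕ)) :
    monIdeal K (T₁ ∪ T₂) = monIdeal K T₁ ⊔ monIdeal K T₂ := by
  rw [monIdeal, Set.image_union, Ideal.span_union]; rfl

theorem monIdeal_singleton (u : σ →₀ ℕ) : monIdeal K {u} = Ideal.span {mon K u} := by
  rw [monIdeal, Set.image_singleton]

theorem span_X_image_eq_monIdeal (A : Set σ) :
    Ideal.span (X '' A) = monIdeal K ((Finsupp.single · 1) '' A) := by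
  rw [monIdeal, Set.image_image]; rfl

theorem colon_monIdeal (T : Set (σ →₀ ℕ)) (u : σ →₀ ℕ) :
    (monIdeal K T).colon (Ideal.span {mon K u}) = monIdeal K ((· - u) '' T) := by
  ext f
  simp only [Ideal.mem_colon_span_singleton, mem_monIdeal, support_mul_mon, Finset.mem_map,
    addRightEmbedding_apply, forall_exists_index, and_imp, forall_apply_eq_imp_iff₂,
    mem_upperClosure, Set.exists_mem_image, tsub_le_iff_right]

def degMultiples (j : ℕ) (T : Set (σ →₀ ℕ)) : Set (σ →₀ ℕ) :=
  {m | mdeg m = j} ∩ upperClosure T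

theorem degMultiples_union (j : ℕ) (T₁ T₂ : Set (σ →₀ ℕ)) :
    degMultiples j (T₁ ∪ T₂) = degMultiples j T₁ ∪ degMultiples j T₂ := by
  simp only [degMultiples, upperClosure_union, UpperSet.coe_inf, Set.inter_union_distrib_left]

theorem span_homogeneous_monIdeal (T : Set (σ →₀ ℕ)) (j : ℕ) :
    Ideal.span {f | f ∈ monIdeal K T ∧ f.IsHomogeneous j} = monIdeal K (degMultiples j T) := by
  apply le_antisymm
  · rw [Ideal.span_le]
    rintro f ⟨hfT, hfj⟩
    refine mem_monIdeal.mpr fun m hm => mem_upperClosure.mpr ⟨m, ⟨?_, ?_⟩, le_rfl⟩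
    exacts [(hfj.degree_eq_sum_deg_support hm).symm, mem_monIdeal.mp hfT m hm]
  · rw [monIdeal, Ideal.span_le]
    rintro _ ⟨m, ⟨hmj, hmT⟩, rfl⟩
    exact Ideal.subset_span ⟨mon_mem_monIdeal.mpr hmT, hmj ▸ isHomogeneous_mon m⟩

theorem le_degree_of_mem_span {G : Set (MvPolynomial σ K)} {e : ℕ}
    (hG : ∀ g ∈ G, g.IsHomogeneous e) {f : MvPolynomial σ K} (hf : f ∈ Ideal.span G)
    {m : σ →₀ ℕ} (hm : m ∈ f.support) : e ≤ m.degree := by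
  classical
  induction hf using Submodule.span_induction generalizing m with
  | mem g hg => exact ((hG g hg).degree_eq_sum_deg_support hm).le
  | zero => simp at hm
  | add x y _ _ hx hy =>
    rcases Finset.mem_union.mp (support_add hm) with h | h
    exacts [hx h, hy h]
  | smul a x _ hx =>
    obtain ⟨b, -, c, hc, rfl⟩ := Finset.mem_add.mp (support_mul a x hm)
    exact (hx hc).trans (by simp)

theorem genByVars_of_genByLinForms {T : Set (σ →₀ ℕ)} (h : genByLinForms (monIdeal K T)) :
    genByVars (monIdeal K T) := by
  obtain ⟨L, hL, hLT⟩ := h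
  refine ⟨{s | X s ∈ monIdeal K T}, le_antisymm ?_ (Ideal.span_le.mpr ?_)⟩
  · rw [hLT, Ideal.span_le]
    intro ℓ hℓ
    have hℓT : ℓ ∈ monIdeal K T := hLT ▸ Ideal.subset_span hℓ
    refine mem_ideal_span_X_image.mpr fun m hm => ?_
    obtain ⟨s, rfl⟩ : m ∈ Set.range (Finsupp.single · 1) :=
      Finsupp.range_single_one ▸ ((hL ℓ hℓ).degree_eq_sum_deg_support hm).symm
    exact ⟨s, hLT ▸ mon_mem_monIdeal.mpr (mem_monIdeal.mp hℓT _ hm), by simp⟩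
  · rintro _ ⟨s, hs, rfl⟩
    exact hs

/-- `(T) : x^u` is generated by variables (see `genByVars_colon_iff`). -/
def HasVarColon (T : Set (σ →₀ ℕ)) (u : σ →₀ ℕ) : Prop :=
  ∀ a, a + u ∈ upperClosure T → ∃ s, a s ≠ 0 ∧ Finsupp.single s 1 + u ∈ upperClosure T

theorem genByVars_colon_iff {T : Set (σ →₀ ℕ)} {u : σ →₀ ℕ} :
    genByVars ((monIdeal K T).colon (Ideal.span {mon K u})) ↔ HasVarColon T u := by
  have hmem : ∀ a, mon K a ∈ (monIdeal K T).colon (Ideal.span {mon K u}) ↔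
      a + u ∈ upperClosure T := by
    intro a
    rw [Ideal.mem_colon_span_singleton, mon_mul, mon_mem_monIdeal]
  constructor
  · rintro ⟨A, hA⟩ a ha
    obtain ⟨s, hsA, hs⟩ := mem_ideal_span_X_image.mp (hA ▸ (hmem a).mpr ha) a
      (by classical simp [mon, support_monomial])
    exact ⟨s, hs, (hmem _).mp (hA ▸ Ideal.subset_span ⟨s, hsA, rfl⟩)⟩
  · intro h
    refine ⟨{s | Finsupp.single s 1 + u ∈ upperClosure T}, le_antisymm ?_ ?_⟩
    · rw [colon_monIdeal, monIdeal, Ideal.span_le]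
      rintro _ ⟨_, ⟨t, ht, rfl⟩, rfl⟩
      obtain ⟨s, hs, hsT⟩ := h (t - u) (mem_upperClosure.mpr ⟨t, ht, le_tsub_add⟩)
      refine mem_ideal_span_X_image.mpr fun m hm => ⟨s, hsT, ?_⟩
      classical simp_all [mon, support_monomial]
    · rw [Ideal.span_le]
      rintro _ ⟨s, hs, rfl⟩
      exact (hmem _).mpr hs

end MonomialIdeals

section HomogeneousLift

open Matrix

variable {K : Type} [Field K] {σ : Type}

attribute [local instance] MvPolynomial.gradedAlgebra in
theorem homogeneousComponent_add_mul {a : MvPolynomial σ K} {c : ℕ} (ha : a.IsHomogeneous c)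
    (b : MvPolynomial σ K) (m : ℕ) :
    homogeneousComponent (c + m) (a * b) = a * homogeneousComponent m b := by
  classical
  have := DirectSum.coe_decompose_mul_add_of_left_mem (homogeneousSubmodule σ K) (j := m) (b := b)
    ((mem_homogeneousSubmodule c a).mpr ha)
  simpa only [DirectSum.decompose, Equiv.coe_fn_mk, decomposition.decompose'_apply] using this

theorem Matrix.isHomogeneous_mul_apply {ι κ μ : Type*} [Fintype κ]
    {A : Matrix ι κ (MvPolynomial σ K)} {B : Matrix κ μ (MvPolynomial σ K)} {a b : ℕ}
    (hA : ∀ k l, (A k l).IsHomogeneous a) (hB : ∀ k l, (B k l).IsHomogeneous b) (k : ι) (l : μ) :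
    ((A * B) k l).IsHomogeneous (a + b) :=
  IsHomogeneous.sum _ _ _ fun j _ => (hA k j).mul (hB j l)

/-- Take homogeneous components of any solution. -/
theorem Matrix.exists_isHomogeneous_mul_eq {ι κ μ : Type*} [Fintype κ]
    {A : Matrix ι κ (MvPolynomial σ K)} {B : Matrix ι μ (MvPolynomial σ K)} {c m : ℕ}
    (hA : ∀ k l, (A k l).IsHomogeneous c) (hB : ∀ k l, (B k l).IsHomogeneous (c + m))
    (hsol : ∀ l, Bᵀ l ∈ Set.range A.mulVec) :
    ∃ X : Matrix κ μ (MvPolynomial σ K), A * X = B ∧ ∀ k l, (X k l).IsHomogeneous m := by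
  choose x hx using hsol
  refine ⟨Matrix.of fun k l => homogeneousComponent m (x l k), ?_,
    fun _ _ => homogeneousComponent_isHomogeneous _ _⟩
  ext1 k l
  calc (A * Matrix.of fun k l => homogeneousComponent m (x l k)) k l
      = homogeneousComponent (c + m) ((A *ᵥ x l) k) := by
        simp [Matrix.mul_apply, Matrix.mulVec, dotProduct, homogeneousComponent_add_mul (hA k _)]
    _ = B k l := by rw [hx l, Matrix.transpose_apply, homogeneousComponent_eq_self (hB k l)]

end HomogeneousLift

namespace MinFreeRes

open Matrix Function

variable {K : Type} [Field K] {σ : Type} {I : Ideal (MvPolynomial σ K)} (res : MinFreeRes I)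

theorem mem_iff_exists_dotProduct {f : MvPolynomial σ K} : f ∈ I ↔ ∃ x, res.g ⬝ᵥ x = f := by
  simp only [← res.aug_range, LinearMap.mem_range, Fintype.linearCombination_apply, smul_eq_mul,
    dotProduct, mul_comm]

theorem g_mem (k : Fin (res.b 0)) : res.g k ∈ I :=
  res.mem_iff_exists_dotProduct.mpr ⟨Pi.single k 1, by simp⟩

theorem exact_g : Exact (res.A 0).mulVec (replicateRow (Fin 1) res.g).mulVec :=
  exact_replicateRow_iff.mpr res.aug_exact

theorem exact_A (i : ℕ) : Exact (res.A (i + 1)).mulVec (res.A i).mulVec :=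
  LinearMap.exact_iff.mpr (res.is_exact i)

/-- `augRank` and `augD` describe the resolution of `R ⧸ I` obtained by prepending `R`. -/
abbrev augRank : ℕ → ℕ
  | 0 => 1
  | i + 1 => res.b i

def augD : (i : ℕ) → Matrix (Fin (res.augRank i)) (Fin (res.augRank (i + 1))) (MvPolynomial σ K)
  | 0 => replicateRow (Fin 1) res.g
  | i + 1 => res.A i

theorem exact_augD : ∀ i, Exact (res.augD (i + 1)).mulVec (res.augD i).mulVec
  | 0 => res.exact_g
  | i + 1 => res.exact_A i

variable {res} {d : ℕ}

theorem isHomogeneous_g (h : ∀ i k, res.dg i k = i + d) (k : Fin (res.b 0)) :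
    (res.g k).IsHomogeneous d := by
  simpa [h] using res.g_hom k

theorem isHomogeneous_A (h : ∀ i k, res.dg i k = i + d) (i : ℕ) (k : Fin (res.b i))
    (l : Fin (res.b (i + 1))) : (res.A i k l).IsHomogeneous 1 := by
  rcases res.A_hom i k l with h0 | ⟨hA, -⟩
  · rw [h0]; exact isHomogeneous_zero _ _ _
  · rwa [h, h, show i + 1 + d - (i + d) = 1 by omega] at hA

theorem isHomogeneous_augD (h : ∀ i k, res.dg i k = i + 1) :
    ∀ i k l, (res.augD i k l).IsHomogeneous 1
  | 0, _, l => isHomogeneous_g h l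
  | i + 1, k, l => isHomogeneous_A h i k l

/-- Multiplication by `u : R ⧸ (J : u) → R ⧸ J` lifts to a map of resolutions, of degree `1`
when both are linear. -/
theorem exists_comparison {J : Ideal (MvPolynomial σ K)} {u : MvPolynomial σ K}
    {F : MinFreeRes J} (hF : ∀ i k, F.dg i k = i + d)
    {P : MinFreeRes (J.colon (Ideal.span {u}))} (hP : ∀ i k, P.dg i k = i + 1)
    (hu : u.IsHomogeneous d) :
    ∃ φ : (i : ℕ) → Matrix (Fin (F.b i)) (Fin (P.b i)) (MvPolynomial σ K),
      (∀ i k l, (φ i k l).IsHomogeneous 1) ∧ F.g ᵥ* φ 0 = u • P.g ∧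
      ∀ i, F.A i * φ (i + 1) = φ i * P.A i := by
  obtain ⟨φ₀, hφ₀, hφ₀1⟩ := exists_isHomogeneous_mul_eq (A := replicateRow (Fin 1) F.g)
    (B := replicateRow (Fin 1) (u • P.g)) (m := 1) (fun _ => isHomogeneous_g hF)
    (fun _ l => hu.mul (isHomogeneous_g hP l)) fun l => by
      obtain ⟨x, hx⟩ := F.mem_iff_exists_dotProduct.mp
        (Ideal.mem_colon_span_singleton.mp (P.g_mem l))
      exact ⟨x, funext fun _ => by simp [replicateRow_mulVec_eq_const, hx, mul_comm]⟩
  rw [← replicateRow_vecMul] at hφ₀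
  have hbase : F.g ᵥ* φ₀ = u • P.g := congrFun hφ₀ 0
  let Liftable (i : ℕ) (φ : Matrix (Fin (F.b i)) (Fin (P.b i)) (MvPolynomial σ K)) : Prop :=
    (∀ k l, (φ k l).IsHomogeneous 1) ∧ ∀ l, (φ * P.A i)ᵀ l ∈ Set.range (F.A i).mulVec
  have hstart : Liftable 0 φ₀ := ⟨hφ₀1, F.exact_g.transpose_mem_range (by
    rw [← Matrix.mul_assoc, ← replicateRow_vecMul, hbase, replicateRow_smul, Matrix.smul_mul,
      P.exact_g.matrix_mul_eq_zero, smul_zero])⟩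
  have hstep : ∀ i φ, Liftable i φ → ∃ φ', Liftable (i + 1) φ' ∧ F.A i * φ' = φ * P.A i := by
    rintro i φ ⟨hφ1, hφP⟩
    obtain ⟨φ', hφ', hφ'1⟩ := exists_isHomogeneous_mul_eq (isHomogeneous_A hF i)
      (isHomogeneous_mul_apply hφ1 (isHomogeneous_A hP i)) hφP
    refine ⟨φ', ⟨hφ'1, (F.exact_A i).transpose_mem_range ?_⟩, hφ'⟩
    rw [← Matrix.mul_assoc, hφ', Matrix.mul_assoc, (P.exact_A i).matrix_mul_eq_zero,
      Matrix.mul_zero]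
  obtain ⟨φ, rfl, hφ⟩ := exists_seq_of_forall_exists Liftable _ hstart hstep
  exact ⟨φ, fun i => (hφ i).1.1, hbase, fun i => (hφ i).2⟩

end MinFreeRes

section MappingCone

open Matrix Function

variable {K : Type} [Field K] {σ : Type} {J : Ideal (MvPolynomial σ K)} {u : MvPolynomial σ K}
  {d : ℕ}

def coneGens (F : MinFreeRes J) (u : MvPolynomial σ K) : Fin (F.b 0 + 1) → MvPolynomial σ K :=
  Sum.elim F.g (fun _ => u) ∘ finSumFinEquiv.symm

/-- Differentials of the mapping cone of `φ`, a map from the augmented resolution `P.augD`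
(shifted by one) to `F`. -/
noncomputable def coneDiff {I : Ideal (MvPolynomial σ K)} (F : MinFreeRes J) (P : MinFreeRes I)
    (φ : (i : ℕ) → Matrix (Fin (F.b i)) (Fin (P.b i)) (MvPolynomial σ K)) (i : ℕ) :
    Matrix (Fin (F.b i + P.augRank i)) (Fin (F.b (i + 1) + P.augRank (i + 1)))
      (MvPolynomial σ K) :=
  reindex finSumFinEquiv finSumFinEquiv (fromBlocks (F.A i) (φ i) 0 (-P.augD i))

theorem isHomogeneous_coneGens {F : MinFreeRes J} (hF : ∀ i k, F.dg i k = i + d)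
    (hu : u.IsHomogeneous d) (k : Fin (F.b 0 + 1)) : (coneGens F u k).IsHomogeneous d := by
  obtain ⟨k | _, rfl⟩ := finSumFinEquiv.surjective k
  exacts [by simpa [coneGens] using F.isHomogeneous_g hF k, by simpa [coneGens] using hu]

theorem isHomogeneous_coneDiff {I : Ideal (MvPolynomial σ K)} {F : MinFreeRes J}
    (hF : ∀ i k, F.dg i k = i + d) {P : MinFreeRes I} (hP : ∀ i k, P.dg i k = i + 1)
    {φ : (i : ℕ) → Matrix (Fin (F.b i)) (Fin (P.b i)) (MvPolynomial σ K)}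
    (hφ : ∀ i k l, (φ i k l).IsHomogeneous 1) (i : ℕ) (k l) :
    (coneDiff F P φ i k l).IsHomogeneous 1 := by
  unfold coneDiff
  rw [reindex_apply, submatrix_apply]
  rcases finSumFinEquiv.symm k with k | k <;> rcases finSumFinEquiv.symm l with l | l
  · exact F.isHomogeneous_A hF i k l
  · exact hφ i k l
  · exact isHomogeneous_zero _ _ _
  · exact (P.isHomogeneous_augD hP i k l).neg

theorem range_linearCombination_coneGens (F : MinFreeRes J) (u : MvPolynomial σ K) :
    LinearMap.range (Fintype.linearCombination (MvPolynomial σ K) (coneGens F u)) =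
      J ⊔ Ideal.span {u} := by
  rw [Fintype.range_linearCombination, coneGens, EquivLike.range_comp, Set.Sum.elim_range,
    Set.range_const, Submodule.span_union, ← Fintype.range_linearCombination, F.aug_range]

theorem exact_coneDiff_zero {F : MinFreeRes J} {P : MinFreeRes (J.colon (Ideal.span {u}))}
    {φ : (i : ℕ) → Matrix (Fin (F.b i)) (Fin (P.b i)) (MvPolynomial σ K)}
    (hbase : F.g ᵥ* φ 0 = u • P.g) :
    Exact (coneDiff F P φ 0).mulVec (replicateRow (Fin 1) (coneGens F u)).mulVec := by
  have hrow : replicateRow (Fin 1) (coneGens F u) =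
      reindex (Equiv.refl _) finSumFinEquiv (replicateRow (Fin 1) (Sum.elim F.g fun _ => u)) :=
    rfl
  rw [hrow]
  refine exact_reindex (exact_fromBlocks_replicateRow F.exact_g hbase fun c x hx => ?_) _ _ _
  exact P.mem_iff_exists_dotProduct.mp (Ideal.mem_colon_span_singleton.mpr
    (F.mem_iff_exists_dotProduct.mpr ⟨x, hx⟩))

theorem exact_coneDiff_succ {I : Ideal (MvPolynomial σ K)} {F : MinFreeRes J} {P : MinFreeRes I}
    {φ : (i : ℕ) → Matrix (Fin (F.b i)) (Fin (P.b i)) (MvPolynomial σ K)}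
    (hchain : ∀ i, F.A i * φ (i + 1) = φ i * P.A i) (i : ℕ) :
    Exact (coneDiff F P φ (i + 1)).mulVec (coneDiff F P φ i).mulVec :=
  exact_reindex (exact_fromBlocks (F.exact_A i) (P.exact_augD i) (hchain i)) _ _ _

theorem hasLinRes_sup_span_singleton (hu : u.IsHomogeneous d) (hJ : HasLinRes J d)
    (hcolon : HasLinRes (J.colon (Ideal.span {u})) 1) : HasLinRes (J ⊔ Ideal.span {u}) d := by
  obtain ⟨F, hF⟩ := hJ
  obtain ⟨P, hP⟩ := hcolon
  obtain ⟨φ, hφ, hbase, hchain⟩ := MinFreeRes.exists_comparison hF hP hu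
  refine ⟨{
    b := fun i => F.b i + P.augRank i
    dg := fun i _ => i + d
    g := coneGens F u
    A := coneDiff F P φ
    g_hom := fun k => by simpa using isHomogeneous_coneGens hF hu k
    A_hom := fun i k l => Or.inr
      ⟨(by simpa [show i + 1 + d - (i + d) = 1 by omega] using
        isHomogeneous_coneDiff hF hP hφ i k l), by omega⟩
    aug_range := range_linearCombination_coneGens F u
    aug_exact := exact_replicateRow_iff.mp (exact_coneDiff_zero hbase)
    is_exact := fun i => LinearMap.exact_iff.mp (exact_coneDiff_succ hchain i) }, fun _ _ => rfl⟩

end MappingCone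

section LinearResolutions

variable {K : Type} [Field K] {σ : Type}

theorem hasLinRes_bot (d : ℕ) : HasLinRes (⊥ : Ideal (MvPolynomial σ K)) d :=
  ⟨{ b := fun _ => 0
     dg := fun i _ => i + d
     g := Fin.elim0
     A := fun _ k => Fin.elim0 k
     g_hom := fun k => Fin.elim0 k
     A_hom := fun _ k => Fin.elim0 k
     aug_range := by simp [Fintype.range_linearCombination]
     aug_exact := Subsingleton.elim _ _
     is_exact := fun _ => Subsingleton.elim _ _ }, fun _ _ => rfl⟩

theorem colon_span_X_image {A : Set σ} {a : σ} (ha : a ∉ A) :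
    (Ideal.span (X '' A) : Ideal (MvPolynomial σ K)).colon
      (Ideal.span {(X a : MvPolynomial σ K)}) = Ideal.span (X '' A) := by
  rw [span_X_image_eq_monIdeal, show (X a : MvPolynomial σ K) = mon K (Finsupp.single a 1) from rfl,
    colon_monIdeal, Set.image_image]
  refine congrArg _ (Set.image_congr fun s hs => ?_)
  have hsa : s ≠ a := ne_of_mem_of_not_mem hs ha
  ext i
  by_cases hi : i = s <;> simp [hi, hsa]

theorem hasLinRes_span_X_image [DecidableEq σ] (B : Finset σ) :
    HasLinRes (Ideal.span (X '' (B : Set σ)) : Ideal (MvPolynomial σ K)) 1 := by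
  induction B using Finset.induction_on with
  | empty => simpa using hasLinRes_bot 1
  | insert a B ha ih =>
    rw [Finset.coe_insert, Set.image_insert_eq, Ideal.span_insert, sup_comm]
    exact hasLinRes_sup_span_singleton (isHomogeneous_X K a) ih
      (by rwa [colon_span_X_image (by exact_mod_cast ha)])

theorem genByVars.hasLinRes [Finite σ] {I : Ideal (MvPolynomial σ K)} (h : genByVars I) :
    HasLinRes I 1 := by
  classical
  obtain ⟨A, rfl⟩ := h
  simpa using hasLinRes_span_X_image (K := K) A.toFinite.toFinset

theorem hasLinRes_sup_span_image {ι α : Type*} [LinearOrder α] {key : ι → α}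
    (hkey : Function.Injective key) {J : Ideal (MvPolynomial σ K)} {d : ℕ} (hJ : HasLinRes J d)
    {f : ι → MvPolynomial σ K} (s : Finset ι) (hf : ∀ i ∈ s, (f i).IsHomogeneous d)
    (hcolon : ∀ i ∈ s, f i ∉ J ⊔ Ideal.span (f '' {j | j ∈ s ∧ key j < key i}) →
      HasLinRes ((J ⊔ Ideal.span (f '' {j | j ∈ s ∧ key j < key i})).colon
        (Ideal.span {f i})) 1) :
    HasLinRes (J ⊔ Ideal.span (f '' s)) d := by
  classical
  induction s using Finset.induction_on_max_value key with
  | empty => simpa using hJ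
  | insert a s ha hmax ih =>
    have hlt : ∀ j ∈ s, key j < key a := fun j hj =>
      (hmax j hj).lt_of_ne (hkey.ne (ne_of_mem_of_not_mem hj ha))
    have hbefore : ∀ i ∈ s,
        {j | j ∈ insert a s ∧ key j < key i} = {j | j ∈ s ∧ key j < key i} := by
      intro i hi
      ext j
      have := hlt i hi
      simp only [Set.mem_ofPred_eq, Finset.mem_insert]
      grind
    have hbefore_a : {j | j ∈ insert a s ∧ key j < key a} = s := by
      ext j
      have := hlt j
      simp only [Set.mem_ofPred_eq, Finset.mem_insert, Finset.mem_coe]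
      grind
    have hs : HasLinRes (J ⊔ Ideal.span (f '' s)) d :=
      ih (fun i hi => hf i (Finset.mem_insert_of_mem hi)) fun i hi => by
        simpa only [hbefore i hi] using hcolon i (Finset.mem_insert_of_mem hi)
    rw [Finset.coe_insert, Set.image_insert_eq, Ideal.span_insert, sup_comm (Ideal.span _),
      ← sup_assoc]
    by_cases hmem : f a ∈ J ⊔ Ideal.span (f '' s)
    · rwa [sup_eq_left.mpr ((Ideal.span_singleton_le_iff_mem _).mpr hmem)]
    · have ha' := hcolon a (Finset.mem_insert_self a s)
      rw [hbefore_a] at ha'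
      exact hasLinRes_sup_span_singleton (hf a (Finset.mem_insert_self a s)) hs (ha' hmem)

theorem HasLinRes.of_mdeg_eq {T : Set (σ →₀ ℕ)} {e d : ℕ} (hT : ∀ t ∈ T, mdeg t = d)
    (h : HasLinRes (monIdeal K T) e) : HasLinRes (monIdeal K T) d := by
  rcases T.eq_empty_or_nonempty with rfl | ⟨t₀, ht₀⟩
  · simpa [monIdeal] using hasLinRes_bot d
  suffices e = d from this ▸ h
  obtain ⟨F, hF⟩ := h
  have hspan : monIdeal K T = Ideal.span (Set.range F.g) :=
    F.aug_range.symm.trans (Fintype.range_linearCombination _ _)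
  have hgens : ∀ g ∈ Set.range F.g, g.IsHomogeneous e := by
    rintro _ ⟨k, rfl⟩; exact F.isHomogeneous_g hF k
  have hmons : ∀ g ∈ mon K '' T, g.IsHomogeneous d := by
    rintro _ ⟨t, ht, rfl⟩; exact hT t ht ▸ isHomogeneous_mon t
  have hmon₀ : mon K t₀ ∈ monIdeal K T := mon_mem_monIdeal.mpr (subset_upperClosure ht₀)
  apply le_antisymm
  · have := le_degree_of_mem_span hgens (hspan ▸ hmon₀) (m := t₀)
      (by classical simp [mon, support_monomial])
    rwa [← mdeg_eq_degree, hT t₀ ht₀] at this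
  · obtain ⟨k, hk⟩ : ∃ k, F.g k ≠ 0 := by
      by_contra! h0
      have hbot : monIdeal K T = ⊥ := hspan.trans (Ideal.span_eq_bot.mpr (by simp [h0]))
      simp [hbot, mon] at hmon₀
    obtain ⟨m, hm⟩ := support_nonempty.mpr hk
    have := le_degree_of_mem_span hmons (F.g_mem k) hm
    exact this.trans_eq ((F.isHomogeneous_g hF k).degree_eq_sum_deg_support hm).symm

end LinearResolutions

section ExponentCombinatorics

variable {σ : Type}

theorem Finsupp.degree_lt_degree {a b : σ →₀ ℕ} (h : a < b) : a.degree < b.degree := by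
  obtain ⟨c, rfl⟩ := le_iff_exists_add.mp h.le
  have hc : c ≠ 0 := by rintro rfl; simp at h
  simpa [Finsupp.degree_eq_zero_iff, Nat.pos_iff_ne_zero] using hc

theorem Finsupp.eq_of_le_of_degree_le {a b : σ →₀ ℕ} (h : a ≤ b) (hd : b.degree ≤ a.degree) :
    a = b :=
  h.eq_of_not_lt fun hlt => (Finsupp.degree_lt_degree hlt).not_ge hd

theorem mem_upperClosure_degMultiples {T : Set (σ →₀ ℕ)} {t m : σ →₀ ℕ} {j : ℕ} (ht : t ∈ T)
    (htm : t ≤ m) (htj : mdeg t ≤ j) (hjm : j ≤ mdeg m) : m ∈ upperClosure (degMultiples j T) := by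
  rw [mdeg_eq_degree] at htj hjm
  have hdeg : m.degree = t.degree + (m - t).degree := by
    rw [← map_add, add_tsub_cancel_of_le htm]
  obtain ⟨g, hg, hgdeg⟩ := Finsupp.exists_le_degree_eq (m - t) (j - t.degree) (by omega)
  refine mem_upperClosure.mpr ⟨t + g, ⟨?_, mem_upperClosure.mpr ⟨t, ht, le_self_add⟩⟩, ?_⟩
  · rw [Set.mem_ofPred_eq, mdeg_eq_degree, map_add, hgdeg]; omega
  · exact (add_le_add_right hg t).trans (add_tsub_cancel_of_le htm).le

theorem HasVarColon.exists_single_add_mem {T : Set (σ →₀ ℕ)} {u m z : σ →₀ ℕ} {j : ℕ}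
    (hcol : HasVarColon T u) (hanti : ∀ t ∈ T, ¬u ≤ t) (hm : mdeg m = j) (hum : u ≤ m)
    (hmT : m ∉ upperClosure T) (hz : z + m ∈ upperClosure T) :
    ∃ s, z s ≠ 0 ∧ Finsupp.single s 1 + m ∈ upperClosure (degMultiples j T) := by
  obtain ⟨w, rfl⟩ := le_iff_exists_add.mp hum
  obtain ⟨s, hs, hsT⟩ := hcol (z + w) (by rwa [add_assoc, add_comm w])
  have hzs : z s ≠ 0 := by
    intro hzs
    have hsw : Finsupp.single s 1 ≤ w :=
      Finsupp.single_le_iff.mpr (by simp_all; omega)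
    exact hmT ((upperClosure T).upper (by rw [add_comm u]; gcongr) hsT)
  refine ⟨s, hzs, ?_⟩
  obtain ⟨t, ht, hts⟩ := mem_upperClosure.mp
    ((upperClosure T).upper (show Finsupp.single s 1 + u ≤ Finsupp.single s 1 + (u + w) by
      gcongr) hsT)
  have hdeg : mdeg (Finsupp.single s 1 + (u + w)) = j + 1 := by
    rw [mdeg_eq_degree, map_add, Finsupp.degree_single, ← mdeg_eq_degree, hm, add_comm]
  -- `t` has degree at most `j`: it cannot be `x_s x^m` itself, as `u ∤ t`
  refine mem_upperClosure_degMultiples ht hts (not_lt.mp fun hjt => ?_) (by omega)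
  rw [mdeg_eq_degree] at hdeg hjt
  have := Finsupp.eq_of_le_of_degree_le hts (by omega)
  exact hanti t ht (by rw [this]; exact le_self_add.trans le_add_self)

theorem exists_lex_lt_le_single_add [LinearOrder σ] {a a' z : σ →₀ ℕ}
    (hdeg : a'.degree = a.degree) (hlt : toLex a < toLex a') (hle : a' ≤ z + a) :
    ∃ c, z c ≠ 0 ∧ ∃ b : σ →₀ ℕ,
      b.degree = a.degree ∧ toLex a < toLex b ∧ b ≤ Finsupp.single c 1 + a := by
  obtain ⟨c, hbelow, hc⟩ := Finsupp.Lex.lt_iff.mp hlt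
  simp only [ofLex_toLex] at hbelow hc
  have hzc : z c ≠ 0 := by
    have := hle c
    simp only [Finsupp.coe_add, Pi.add_apply] at this
    omega
  obtain ⟨ℓ, hcℓ, haℓ⟩ : ∃ ℓ, c < ℓ ∧ a ℓ ≠ 0 := by
    by_contra! h
    have hle' : a ≤ a' := fun i => by
      rcases lt_trichotomy i c with hi | rfl | hi
      exacts [(hbelow i hi).le, hc.le, (h i hi).trans_le (Nat.zero_le _)]
    exact (Finsupp.degree_lt_degree (hle'.lt_of_ne (by rintro rfl; exact hc.false))).ne' hdeg
  have hℓ : Finsupp.single ℓ 1 ≤ a := Finsupp.single_le_iff.mpr (Nat.one_le_iff_ne_zero.mpr haℓ)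
  -- move one unit of `a` from `ℓ` to the first position `c` where `a` and `a'` differ
  refine ⟨c, hzc, a - Finsupp.single ℓ 1 + Finsupp.single c 1, ?_, ?_, fun i => ?_⟩
  · have := congrArg Finsupp.degree (tsub_add_cancel_of_le hℓ)
    simp only [map_add, Finsupp.degree_single] at this ⊢
    exact this
  · refine Finsupp.Lex.lt_iff.mpr ⟨c, fun i hi => ?_, ?_⟩
    · simp [hi.ne', (hi.trans hcℓ).ne']
    · simp [hcℓ.ne']
  · simp only [Finsupp.coe_add, Finsupp.coe_tsub, Pi.add_apply, Pi.sub_apply]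
    omega

end ExponentCombinatorics

section ComponentwiseLinear

variable {K : Type} [Field K] {σ : Type} [LinearOrder σ]

/-- The degree-`j` multiples of `x^u` added before `x^m` in decreasing lexicographic order. -/
def lexLaterMultiples (j : ℕ) (u m : σ →₀ ℕ) : Set (σ →₀ ℕ) :=
  {w | w ∈ degMultiples j {u} ∧ toLex m < toLex w}

theorem hasVarColon_degMultiples_union {T : Set (σ →₀ ℕ)} {u m : σ →₀ ℕ} {j : ℕ}
    (hcol : HasVarColon T u) (hanti : ∀ t ∈ T, ¬u ≤ t) (hm : m ∈ degMultiples j {u})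
    (hmT : m ∉ upperClosure (degMultiples j T ∪ lexLaterMultiples j u m)) :
    HasVarColon (degMultiples j T ∪ lexLaterMultiples j u m) m := by
  obtain ⟨hmj, hum⟩ := hm
  replace hum : u ≤ m := by simpa using hum
  intro z hz
  simp only [upperClosure_union, UpperSet.mem_inf_iff] at hz ⊢
  rcases hz with hz | hz
  · obtain ⟨q, ⟨-, hqT⟩, hqz⟩ := mem_upperClosure.mp hz
    obtain ⟨t, ht, htq⟩ := mem_upperClosure.mp hqT
    have hmT' : m ∉ upperClosure T := fun h =>
      hmT (by
        rw [upperClosure_union, UpperSet.mem_inf_iff]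
        exact Or.inl (subset_upperClosure ⟨hmj, h⟩))
    obtain ⟨s, hs, hsm⟩ := hcol.exists_single_add_mem hanti hmj hum hmT'
      (mem_upperClosure.mpr ⟨t, ht, htq.trans hqz⟩)
    exact ⟨s, hs, Or.inl hsm⟩
  · obtain ⟨t', ⟨⟨ht'j, hut'⟩, hmt'⟩, ht'z⟩ := mem_upperClosure.mp hz
    replace hut' : u ≤ t' := by simpa using hut'
    obtain ⟨a, rfl⟩ := le_iff_exists_add.mp hum
    obtain ⟨a', rfl⟩ := le_iff_exists_add.mp hut'
    rw [Set.mem_ofPred_eq, mdeg_eq_degree, map_add] at hmj ht'j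
    obtain ⟨c, hc, b, hb, hab, hba⟩ := exists_lex_lt_le_single_add (a := a) (a' := a') (z := z)
      (by omega) (by simpa [toLex_add] using hmt')
      (by rw [add_left_comm] at ht'z; exact le_of_add_le_add_left ht'z)
    refine ⟨c, hc, Or.inr (mem_upperClosure.mpr ⟨u + b, ⟨⟨?_, by simp⟩, ?_⟩, ?_⟩)⟩
    · rw [Set.mem_ofPred_eq, mdeg_eq_degree, map_add, hb]; omega
    · simpa [toLex_add] using hab
    · rw [add_left_comm]; gcongr

theorem hasLinRes_degMultiples_union_singleton [Finite σ] {T : Set (σ →₀ ℕ)} {u : σ →₀ ℕ}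
    {j : ℕ} (hanti : ∀ t ∈ T, ¬u ≤ t) (hcol : HasVarColon T u)
    (h : HasLinRes (monIdeal K (degMultiples j T)) j) :
    HasLinRes (monIdeal K (degMultiples j (T ∪ {u}))) j := by
  classical
  have hW : (degMultiples j {u}).Finite := (Finsupp.finite_of_degree_eq j).subset
    fun w hw => (mdeg_eq_degree w).symm.trans hw.1
  rw [degMultiples_union, monIdeal_union, monIdeal, ← hW.coe_toFinset]
  refine hasLinRes_sup_span_image (key := fun w => OrderDual.toDual (toLex w))
    (OrderDual.toDual.injective.comp toLex.injective) h _ (fun w hw => ?_) fun m hm hmT => ?_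
  · exact (hW.mem_toFinset.mp hw).1 ▸ isHomogeneous_mon w
  · have hlater : {w | w ∈ hW.toFinset ∧ OrderDual.toDual (toLex w) < OrderDual.toDual (toLex m)}
        = lexLaterMultiples j u m := by
      ext w; simp [lexLaterMultiples]
    change mon K m ∉ monIdeal K _ ⊔ monIdeal K _ at hmT
    change HasLinRes ((monIdeal K _ ⊔ monIdeal K _).colon _) 1
    rw [hlater, ← monIdeal_union, mon_mem_monIdeal] at hmT
    rw [hlater, ← monIdeal_union]
    exact genByVars.hasLinRes (genByVars_colon_iff.mpr
      (hasVarColon_degMultiples_union hcol hanti (hW.mem_toFinset.mp hm) hmT))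

end ComponentwiseLinear

section LinearOver

theorem induction_union_image_lt {α : Type*} {r : ℕ} {Φ : Set α → Prop} (S : Set α)
    (v : Fin r → α) (h₀ : Φ S)
    (step : ∀ i, Φ (S ∪ v '' {j | j < i}) → Φ (S ∪ v '' {j | j < i} ∪ {v i})) :
    Φ (S ∪ Set.range v) := by
  suffices h : ∀ m ≤ r, Φ (S ∪ v '' {j | (j : ℕ) < m}) by
    simpa [Set.image_univ] using h r le_rfl
  intro m
  induction m with
  | zero => simpa using h₀
  | succ m ih =>
    intro hm
    have := step ⟨m, hm⟩ (by simpa [Fin.lt_def] using ih (by omega))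
    convert this using 1
    ext w
    simp only [Set.mem_union, Set.mem_image, Set.mem_ofPred_eq, Set.mem_singleton_iff,
      Fin.lt_def]
    constructor
    · rintro (hw | ⟨j, hj, rfl⟩)
      · exact Or.inl (Or.inl hw)
      · rcases Nat.lt_succ_iff_lt_or_eq.mp hj with hj | hj
        exacts [Or.inl (Or.inr ⟨j, hj, rfl⟩), Or.inr (congrArg v (Fin.ext hj))]
    · rintro ((hw | ⟨j, hj, rfl⟩) | rfl)
      exacts [Or.inl hw, Or.inr ⟨j, by omega, rfl⟩, Or.inr ⟨⟨m, hm⟩, by simp, rfl⟩]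

theorem IsMinGenSet.not_le_of_mem_union_image {σ : Type} {r : ℕ} {S : Set (σ →₀ ℕ)}
    {v : Fin r → σ →₀ ℕ} (hmin : IsMinGenSet (S ∪ Set.range v)) (hinj : Function.Injective v)
    (hv : ∀ i, v i ∉ S) (i : Fin r) : ∀ t ∈ S ∪ v '' {j | j < i}, ¬v i ≤ t := by
  rintro t ht hle
  have heq := hmin (v i) (Or.inr ⟨i, rfl⟩) t (ht.imp id fun ⟨j, _, hj⟩ => ⟨j, hj⟩) hle
  rcases ht with htS | ⟨j, hj, rfl⟩
  · exact hv i (heq ▸ htS)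
  · exact (hinj heq ▸ hj : i < i).false

end LinearOver

theorem stmt_12_general {K : Type} [Field K] {n r : ℕ} (S : Set (Fin n →₀ ℕ))
    (v : Fin r → (Fin n →₀ ℕ)) (hinj : Function.Injective v) (hv : ∀ i, v i ∉ S)
    (hmin : IsMinGenSet (S ∪ Set.range v))
    (hlin : ∀ i : Fin r, genByLinForms (Submodule.colon
        (monIdeal K (S ∪ ((fun j => v j) '' {j | j < i})))
        (Ideal.span {mon K (v i)}))) :
    (CompLinear K (monIdeal K S) → CompLinear K (monIdeal K (S ∪ Set.range v))) ∧
    (∀ d : ℕ, (∃ e, HasLinRes (monIdeal K S) e) →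
      (∀ w ∈ S ∪ Set.range v, mdeg w = d) →
      ∃ e, HasLinRes (monIdeal K (S ∪ Set.range v)) e) := by
  have hvars : ∀ i, genByVars ((monIdeal K (S ∪ v '' {j | j < i})).colon
      (Ideal.span {mon K (v i)})) := fun i => by
    have := hlin i
    rw [colon_monIdeal] at this ⊢
    exact genByVars_of_genByLinForms this
  constructor
  · intro hJ j
    rw [span_homogeneous_monIdeal]
    refine induction_union_image_lt (Φ := fun T => HasLinRes (monIdeal K (degMultiples j T)) j)
      S v (by simpa only [span_homogeneous_monIdeal] using hJ j) fun i hi => ?_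
    exact hasLinRes_degMultiples_union_singleton (hmin.not_le_of_mem_union_image hinj hv i)
      (genByVars_colon_iff.mp (hvars i)) hi
  · rintro d ⟨e, he⟩ hdeg
    refine ⟨d, induction_union_image_lt (Φ := fun T => HasLinRes (monIdeal K T) d) S v
      (he.of_mdeg_eq fun t ht => hdeg t (Or.inl ht)) fun i hi => ?_⟩
    rw [monIdeal_union, monIdeal_singleton]
    exact hasLinRes_sup_span_singleton (hdeg (v i) (Or.inr ⟨i, rfl⟩) ▸ isHomogeneous_mon (v i))
      hi (hvars i).hasLinRes

/-- Let `J ⊆ I` be monomial ideals such that `I` is linear over `J`: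
`G(I) = G(J) ∪ {v_1, …, v_r}` (here `G(J) = S`) and each colon ideal
`(J, v_1, …, v_{i-1}) : v_i` is generated by linear forms.  If `J` is componentwise
linear, then so is `I`.  Moreover, if `J` has a linear resolution and `I` is generated in
a single degree, then `I` has a linear resolution. -/
theorem stmt_12 {K : Type} [Field K] {n r : ℕ} (S : Set (Fin n →₀ ℕ)) (hfin : S.Finite)
    (v : Fin r → (Fin n →₀ ℕ)) (hinj : Function.Injective v) (hv : ∀ i, v i ∉ S)
    (hmin : IsMinGenSet (S ∪ Set.range v))
    (hlin : ∀ i : Fin r, genByLinForms (Submodule.colon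
        (monIdeal K (S ∪ ((fun j => v j) '' {j | j < i})))
        (Ideal.span {mon K (v i)}))) :
    (CompLinear K (monIdeal K S) → CompLinear K (monIdeal K (S ∪ Set.range v))) ∧
    (∀ d : ℕ, (∃ e, HasLinRes (monIdeal K S) e) →
      (∀ w ∈ S ∪ Set.range v, mdeg w = d) →
      ∃ e, HasLinRes (monIdeal K (S ∪ Set.range v)) e) :=
  stmt_12_general S v hinj hv hmin hlin
end

section
/- Let C be a d-uniform clutter on [n] and e a (d−1)-subset of [n]. Then e is a simplicial maximal subcircuit of C if and only if I(\bar{C}) : x_e is generated by a proper subset of {x_i : i ∈ [n]\e}. In particular, if e ∈ Simp(C), then x_e is strongly linear over I(\bar{C}). -/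
open MvPolynomial

/-- The squarefree exponent vector of a subset `s ⊆ [n]`, i.e. `x_s = ∏_{i ∈ s} x_i`. -/
noncomputable def expOf {n : ℕ} (s : Finset (Fin n)) : Fin n →₀ ℕ :=
  ∑ i ∈ s, Finsupp.single i 1

/-! The colon ideal `I(C̄) : x_e` is the monomial ideal generated by the `x_{F \ e}` with
`F ∉ C`, `|F| = d`, and the variables it contains are exactly the `x_i` with `i ∉ N_C[e]`.
If every `d`-subset of `N_C[e]` is a circuit, each non-circuit `F` leaves `N_C[e]`, so
`x_{F \ e}` is divisible by one of these variables and the colon is generated by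
`{x_i : i ∉ N_C[e]}`, a proper subset of the variables outside `e` because `|N_C[e]| > |e|`.
Conversely, if the colon is generated by the variables `x_i`, `i ∈ A`, then `A` must be the
complement of `N_C[e]`, and a non-circuit `d`-subset `F ⊆ N_C[e]` would put `x_{F \ e}` in the
colon without any generator dividing it. -/

section MonomialIdeal

variable {K : Type} [Field K] {σ : Type}

theorem mem_monIdeal_iff {S : Set (σ →₀ ℕ)} {f : MvPolynomial σ K} :
    f ∈ monIdeal K S ↔ ∀ v ∈ f.support, ∃ w ∈ S, w ≤ v :=
  mem_ideal_span_monomial_image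

theorem support_mon (v : σ →₀ ℕ) : (mon K v).support = {v} := by
  classical
  exact support_monomial.trans (if_neg one_ne_zero)

theorem mon_mem_monIdeal_iff {S : Set (σ →₀ ℕ)} {v : σ →₀ ℕ} :
    mon K v ∈ monIdeal K S ↔ ∃ w ∈ S, w ≤ v := by
  simp [mem_monIdeal_iff, support_mon]

theorem mon_mem_span_X_image_iff {A : Set σ} {v : σ →₀ ℕ} :
    mon K v ∈ Ideal.span (X '' A : Set (MvPolynomial σ K)) ↔ ∃ i ∈ A, v i ≠ 0 := by
  simp [mem_ideal_span_X_image, support_mon]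

theorem X_mem_span_X_image_iff {A : Set σ} {i : σ} :
    (X i : MvPolynomial σ K) ∈ Ideal.span (X '' A) ↔ i ∈ A := by
  rw [show (X i : MvPolynomial σ K) = mon K (Finsupp.single i 1) from rfl,
    mon_mem_span_X_image_iff]
  simp [Finsupp.single_apply_ne_zero]

theorem colon_monIdeal_mon (S : Set (σ →₀ ℕ)) (u : σ →₀ ℕ) :
    (monIdeal K S).colon (Ideal.span {mon K u}) = monIdeal K ((· - u) '' S) := by
  ext f
  rw [Ideal.mem_colon_span_singleton, mem_monIdeal_iff, mem_monIdeal_iff, support_mul_mon]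
  simp [tsub_le_iff_right]

end MonomialIdeal

section ExpOf

variable {n : ℕ}

theorem expOf_apply (s : Finset (Fin n)) (i : Fin n) : expOf s i = if i ∈ s then 1 else 0 := by
  simp [expOf, Finsupp.finsetSum_apply, Finsupp.single_apply]

theorem expOf_apply_ne_zero {s : Finset (Fin n)} {i : Fin n} : expOf s i ≠ 0 ↔ i ∈ s := by
  simp [expOf_apply]

theorem expOf_singleton (i : Fin n) : expOf {i} = Finsupp.single i 1 :=
  Finset.sum_singleton _ _

theorem expOf_le_expOf_iff {s t : Finset (Fin n)} : expOf s ≤ expOf t ↔ s ⊆ t := by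
  refine ⟨fun h i hi => ?_, fun h i => ?_⟩
  · by_contra hit
    simpa [expOf_apply, hi, hit] using h i
  · by_cases hi : i ∈ s
    · simp [expOf_apply, hi, h hi]
    · simp [expOf_apply, hi]

theorem expOf_sub_expOf (s t : Finset (Fin n)) : expOf s - expOf t = expOf (s \ t) := by
  ext i
  by_cases hs : i ∈ s <;> by_cases ht : i ∈ t <;> simp [expOf_apply, hs, ht]

end ExpOf

section Clutter

variable {K : Type} [Field K] {n d : ℕ} (C : Finset (Finset (Fin n))) (e : Finset (Fin n))

def closedNbhd : Finset (Fin n) := e ∪ Finset.univ.filter (fun i => insert i e ∈ C)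

variable (K d)

noncomputable def complClutterIdeal : Ideal (MvPolynomial (Fin n) K) :=
  monIdeal K {w | ∃ F : Finset (Fin n), F.card = d ∧ F ∉ C ∧ w = expOf F}

noncomputable def complClutterColon : Ideal (MvPolynomial (Fin n) K) :=
  monIdeal K ((fun F => expOf (F \ e)) '' {F | F.card = d ∧ F ∉ C})

theorem colon_complClutterIdeal :
    (complClutterIdeal K d C).colon (Ideal.span {mon K (expOf e)}) =
      complClutterColon K d C e := by
  rw [complClutterIdeal, colon_monIdeal_mon, complClutterColon]
  congr 1
  ext w
  simp [expOf_sub_expOf, eq_comm]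

def IsSimplicialSubcircuit : Prop :=
  d ≤ (closedNbhd C e).card ∧ ∀ F ⊆ closedNbhd C e, F.card = d → F ∈ C

variable {K C d e}

theorem X_mem_complClutterColon_iff (hd : 1 ≤ d) (he : e.card = d - 1) (i : Fin n) :
    X i ∈ complClutterColon K d C e ↔ i ∉ closedNbhd C e := by
  rw [show (X i : MvPolynomial (Fin n) K) = mon K (expOf {i}) by rw [expOf_singleton]; rfl,
    complClutterColon, mon_mem_monIdeal_iff]
  simp only [Set.exists_mem_image, expOf_le_expOf_iff, closedNbhd,
    Finset.mem_union, Finset.mem_filter, Finset.mem_univ, true_and, not_or]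
  constructor
  · rintro ⟨F, ⟨hFd, hFC⟩, hFe⟩
    have hF : F ⊆ insert i e := by
      intro j hj
      by_cases hje : j ∈ e
      · exact Finset.mem_insert_of_mem hje
      · exact Finset.mem_insert.2
          (.inl (Finset.mem_singleton.1 (hFe (Finset.mem_sdiff.2 ⟨hj, hje⟩))))
    have hie : i ∉ e := by
      intro hie
      have := Finset.card_le_card (Finset.insert_eq_of_mem hie ▸ hF)
      omega
    refine ⟨hie, fun hiC => hFC ?_⟩
    rwa [Finset.eq_of_subset_of_card_le hF (by rw [Finset.card_insert_of_notMem hie]; omega)]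
  · rintro ⟨hie, hiC⟩
    refine ⟨insert i e, ⟨by rw [Finset.card_insert_of_notMem hie]; omega, hiC⟩, fun j hj => ?_⟩
    rw [Finset.mem_sdiff, Finset.mem_insert] at hj
    rw [Finset.mem_singleton]
    tauto

theorem complClutterColon_eq_span_X_compl (hd : 1 ≤ d) (he : e.card = d - 1)
    (hsimp : ∀ F ⊆ closedNbhd C e, F.card = d → F ∈ C) :
    complClutterColon K d C e = Ideal.span (X '' ↑(closedNbhd C e)ᶜ) := by
  apply le_antisymm
  · rw [complClutterColon, monIdeal, Ideal.span_le]
    rintro _ ⟨_, ⟨F, ⟨hFd, hFC⟩, rfl⟩, rfl⟩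
    obtain ⟨i, hiF, hiN⟩ := Finset.not_subset.1 fun hF => hFC (hsimp F hF hFd)
    have hie : i ∉ e := fun hie => hiN (Finset.mem_union_left _ hie)
    exact mon_mem_span_X_image_iff.2
      ⟨i, by simpa using hiN, expOf_apply_ne_zero.2 (Finset.mem_sdiff.2 ⟨hiF, hie⟩)⟩
  · rw [Ideal.span_le]
    rintro _ ⟨i, hi, rfl⟩
    exact (X_mem_complClutterColon_iff hd he i).2 (by simpa using hi)

theorem eq_compl_closedNbhd_of_complClutterColon_eq (hd : 1 ≤ d) (he : e.card = d - 1)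
    {A : Finset (Fin n)} (hA : complClutterColon K d C e = Ideal.span (X '' ↑A)) :
    A = (closedNbhd C e)ᶜ := by
  ext i
  rw [Finset.mem_compl, ← X_mem_complClutterColon_iff (K := K) hd he, hA,
    X_mem_span_X_image_iff, Finset.mem_coe]

theorem mem_of_subset_closedNbhd
    (hN : complClutterColon K d C e = Ideal.span (X '' ↑(closedNbhd C e)ᶜ))
    {F : Finset (Fin n)} (hF : F ⊆ closedNbhd C e) (hFd : F.card = d) : F ∈ C := by
  by_contra hFC
  have hmem : mon K (expOf (F \ e)) ∈ complClutterColon K d C e :=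
    Ideal.subset_span ⟨_, ⟨F, ⟨hFd, hFC⟩, rfl⟩, rfl⟩
  rw [hN, mon_mem_span_X_image_iff] at hmem
  obtain ⟨i, hiN, hiF⟩ := hmem
  have hiN : i ∉ closedNbhd C e := by simpa using hiN
  exact hiN (hF (Finset.mem_sdiff.1 (expOf_apply_ne_zero.1 hiF)).1)

theorem isSimplicialSubcircuit_iff (hd : 1 ≤ d) (he : e.card = d - 1) :
    IsSimplicialSubcircuit d C e ↔
      ∃ A : Finset (Fin n), A ⊂ eᶜ ∧ complClutterColon K d C e = Ideal.span (X '' ↑A) := by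
  constructor
  · rintro ⟨hcard, hsimp⟩
    have he_ssubset : e ⊂ closedNbhd C e :=
      Finset.ssubset_iff_subset_ne.2
        ⟨Finset.subset_union_left, fun h => by rw [← h] at hcard; omega⟩
    exact ⟨_, Finset.compl_ssubset_compl.2 he_ssubset,
      complClutterColon_eq_span_X_compl hd he hsimp⟩
  · rintro ⟨A, hA, hcolon⟩
    obtain rfl := eq_compl_closedNbhd_of_complClutterColon_eq hd he hcolon
    have := Finset.card_lt_card (Finset.compl_ssubset_compl.1 hA)
    exact ⟨by omega, fun F hF hFd => mem_of_subset_closedNbhd hcolon hF hFd⟩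

end Clutter

theorem stmt_19_general {K : Type} [Field K] {n d : ℕ} (hd : 1 ≤ d)
    (C : Finset (Finset (Fin n)))
    (e : Finset (Fin n)) (he : e.card = d - 1) :
    ((d ≤ (e ∪ Finset.univ.filter (fun i => insert i e ∈ C)).card ∧
      ∀ F : Finset (Fin n), F ⊆ e ∪ Finset.univ.filter (fun i => insert i e ∈ C) →
        F.card = d → F ∈ C)
    ↔ ∃ A : Finset (Fin n), A ⊂ eᶜ ∧
        Submodule.colon
          (monIdeal K {w : Fin n →₀ ℕ | ∃ F : Finset (Fin n), F.card = d ∧ F ∉ C ∧ w = expOf F})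
          (Ideal.span {mon K (expOf e)})
        = Ideal.span ((fun i => (X i : MvPolynomial (Fin n) K)) '' (A : Set (Fin n)))) ∧
    ((d ≤ (e ∪ Finset.univ.filter (fun i => insert i e ∈ C)).card ∧
      ∀ F : Finset (Fin n), F ⊆ e ∪ Finset.univ.filter (fun i => insert i e ∈ C) →
        F.card = d → F ∈ C) →
      genByVars (Submodule.colon
        (monIdeal K {w : Fin n →₀ ℕ | ∃ F : Finset (Fin n), F.card = d ∧ F ∉ C ∧ w = expOf F})
        (Ideal.span {mon K (expOf e)}))) := by
  have key := isSimplicialSubcircuit_iff (K := K) (C := C) hd he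
  rw [← colon_complClutterIdeal] at key
  exact ⟨key, fun h => (key.1 h).elim fun A hA => ⟨A, hA.2⟩⟩

/-- Let `C` be a `d`-uniform clutter on `[n]` and `e` a `(d−1)`-subset
of `[n]`, with closed neighborhood `N_C[e] = e ∪ {i : e ∪ {i} ∈ C}`.  Then `e` is a
simplicial maximal subcircuit of `C` (i.e. `|N_C[e]| ≥ d` and every `d`-subset of
`N_C[e]` is a circuit of `C`) if and only if `I(C̄) : x_e` is generated by a proper
subset of `{x_i : i ∈ [n] \ e}`.  In particular, if `e ∈ Simp(C)`, then `x_e` is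
strongly linear over `I(C̄)`, i.e. `I(C̄) : x_e` is generated by variables. -/
theorem stmt_19 {K : Type} [Field K] {n d : ℕ} (hd : 1 ≤ d)
    (C : Finset (Finset (Fin n))) (hC : ∀ F ∈ C, F.card = d)
    (e : Finset (Fin n)) (he : e.card = d - 1) :
    ((d ≤ (e ∪ Finset.univ.filter (fun i => insert i e ∈ C)).card ∧
      ∀ F : Finset (Fin n), F ⊆ e ∪ Finset.univ.filter (fun i => insert i e ∈ C) →
        F.card = d → F ∈ C)
    ↔ ∃ A : Finset (Fin n), A ⊂ eᶜ ∧
        Submodule.colon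
          (monIdeal K {w : Fin n →₀ ℕ | ∃ F : Finset (Fin n), F.card = d ∧ F ∉ C ∧ w = expOf F})
          (Ideal.span {mon K (expOf e)})
        = Ideal.span ((fun i => (X i : MvPolynomial (Fin n) K)) '' (A : Set (Fin n)))) ∧
    ((d ≤ (e ∪ Finset.univ.filter (fun i => insert i e ∈ C)).card ∧
      ∀ F : Finset (Fin n), F ⊆ e ∪ Finset.univ.filter (fun i => insert i e ∈ C) →
        F.card = d → F ∈ C) →
      genByVars (Submodule.colon
        (monIdeal K {w : Fin n →₀ ℕ | ∃ F : Finset (Fin n), F.card = d ∧ F ∉ C ∧ w = expOf F})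
        (Ideal.span {mon K (expOf e)}))) :=
  stmt_19_general hd C e he
end
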